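/- For any action of a finite group G on a finite groupoid X, the cardinality of the homotopy quotient (action groupoid) X/G equals |X| / |G|. -/

import Mathlib

open CategoryTheory

noncomputable section

/-- Groupoid cardinality: `|X| = Σ_{x ∈ π₀X} 1/|Aut x|`. -/
def gcard (C : Type*) [Category C] : ℚ :=
  ∑ᶠ q : Quotient (isIsomorphicSetoid C), ((Nat.card (Aut (Quotient.out q)) : ℚ))⁻¹

/-!
Isomorphism classes of `X/G` are the `G`-orbits on `π₀ X`, and an automorphism of `x` in `X/G`
is a pair `(g, φ : g • x ⟶ x)` with `g` in the stabilizer of `[x]`, so that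
`|Aut_{X/G} x| = |Stab [x]| · |Aut x|`. As `smulHom g` is injective on hom-sets (`smulHom g⁻¹`
undoes it up to `eqToHom`s), `|Aut x|` is constant along orbits, and by orbit–stabilizer the
orbit of `[x]` contributes `[G : Stab [x]] / |Aut x| = |G| / |Aut_{X/G} x|` to `|X|`.
-/

local notation "π₀ " X:max => Quotient (isIsomorphicSetoid X)

theorem Nat.card_sigma_eq_card_nonempty_mul {α : Type*} [Finite α] {β : α → Type*}
    [∀ a, Finite (β a)] {n : ℕ} (h : ∀ a, Nonempty (β a) → Nat.card (β a) = n) :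
    Nat.card (Σ a, β a) = Nat.card {a // Nonempty (β a)} * n := by
  classical
  have := Fintype.ofFinite α
  have hβ (a : α) : Nat.card (β a) = if Nonempty (β a) then n else 0 := by
    split_ifs with ha
    · exact h a ha
    · have := not_nonempty_iff.mp ha
      exact Nat.card_of_isEmpty
  rw [Nat.card_sigma, Finset.sum_congr rfl fun a _ => hβ a, Finset.sum_ite, Finset.sum_const_zero,
    add_zero, Finset.sum_const, smul_eq_mul, Nat.card_eq_fintype_card, Fintype.card_subtype]

theorem MulAction.sum_orbit_eq_card_smul {G α M : Type*} [Monoid G] [MulAction G α]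
    [AddCommMonoid M] [Fintype α] (w : α → M) (hw : ∀ (g : G) a, w (g • a) = w a) (a : α)
    [DecidablePred (· ∈ orbit G a)] :
    ∑ b with b ∈ orbit G a, w b = Nat.card (orbit G a) • w a := by
  rw [Finset.sum_congr rfl fun b hb => ?_, Finset.sum_const]
  · rw [Nat.card_eq_fintype_card, Fintype.card_subtype]
  · obtain ⟨g, rfl⟩ := (Finset.mem_filter.mp hb).2
    exact hw g a

namespace CategoryTheory

theorem card_aut_out_mk {C : Type*} [Category C] (x : C) :
    Nat.card (Aut (⟦x⟧ : π₀ C).out) = Nat.card (Aut x) :=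
  Nat.card_congr (Aut.autMulEquivOfIso (Quotient.mk_out (s := isIsomorphicSetoid C) x).some).toEquiv

namespace Groupoid

section Cardinality

variable {X : Type*} [Groupoid X]

theorem card_hom_eq_card_aut {x y : X} (f : x ⟶ y) : Nat.card (x ⟶ y) = Nat.card (Aut y) :=
  (Nat.card_congr ((asIso f).homCongr (Iso.refl y))).trans
    (Nat.card_congr (isoEquivHom y y)).symm

theorem finite_hom [∀ x : X, Finite (Aut x)] (x y : X) : Finite (x ⟶ y) := by
  rcases isEmpty_or_nonempty (x ⟶ y) with h | ⟨⟨f⟩⟩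
  · infer_instance
  · exact Nat.finite_of_card_ne_zero ((card_hom_eq_card_aut f).trans_ne Nat.card_pos.ne')

theorem mk_eq_mk_iff {x y : X} : (⟦x⟧ : π₀ X) = ⟦y⟧ ↔ Nonempty (x ⟶ y) :=
  Quotient.eq.trans (isoEquivHom x y).nonempty_congr

end Cardinality

def actionRel (G X : Type*) [SMul G X] [Quiver X] (x y : X) : Prop :=
  ∃ g : G, Nonempty ((g • x) ⟶ y)

section IsoClassAction

open MulAction

variable {G X : Type*} [Group G] [Groupoid X] [MulAction G X] [MulAction G (π₀ X)]

theorem actionRel_iff (smul_mk : ∀ (g : G) (x : X), g • (⟦x⟧ : π₀ X) = ⟦g • x⟧) {x y : X} :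
    actionRel G X x y ↔ (⟦y⟧ : π₀ X) ∈ orbit G ⟦x⟧ := by
  simp only [actionRel, mem_orbit_iff, smul_mk, mk_eq_mk_iff]

theorem quot_mk_actionRel_eq_iff (smul_mk : ∀ (g : G) (x : X), g • (⟦x⟧ : π₀ X) = ⟦g • x⟧)
    {x y : X} : Quot.mk (actionRel G X) x = Quot.mk _ y ↔ (⟦y⟧ : π₀ X) ∈ orbit G ⟦x⟧ := by
  have equiv : _root_.Equivalence (actionRel G X) := by
    have h : actionRel G X = fun x y => orbitRel G (π₀ X) ⟦x⟧ ⟦y⟧ := by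
      ext x y
      rw [actionRel_iff smul_mk, orbitRel_apply, mem_orbit_symm]
    exact h ▸ InvImage.equivalence _ _ (orbitRel G _).iseqv
  exact (equiv.quot_mk_eq_iff x y).trans (actionRel_iff smul_mk)

theorem mem_stabilizer_mk_iff (smul_mk : ∀ (g : G) (x : X), g • (⟦x⟧ : π₀ X) = ⟦g • x⟧)
    {g : G} {x : X} : g ∈ stabilizer G (⟦x⟧ : π₀ X) ↔ Nonempty ((g • x) ⟶ x) := by
  rw [mem_stabilizer_iff, smul_mk, mk_eq_mk_iff]

theorem card_sigma_smul_hom [Finite G] [∀ x : X, Finite (Aut x)]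
    (smul_mk : ∀ (g : G) (x : X), g • (⟦x⟧ : π₀ X) = ⟦g • x⟧) (x : X) :
    Nat.card (Σ g : G, (g • x) ⟶ x) =
      Nat.card (stabilizer G (⟦x⟧ : π₀ X)) * Nat.card (Aut x) := by
  have := finite_hom (X := X)
  rw [Nat.card_sigma_eq_card_nonempty_mul fun g ⟨φ⟩ => card_hom_eq_card_aut φ]
  congr 1
  exact Nat.card_congr (Equiv.subtypeEquivRight fun g => (mem_stabilizer_mk_iff smul_mk).symm)

theorem sum_inv_card_aut_fiber [Finite G] [Fintype (π₀ X)] [∀ x : X, Finite (Aut x)]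
    [DecidableEq (Quot (actionRel G X))]
    (smul_mk : ∀ (g : G) (x : X), g • (⟦x⟧ : π₀ X) = ⟦g • x⟧)
    (card_aut_smul : ∀ (g : G) (x : X), Nat.card (Aut (g • x)) = Nat.card (Aut x))
    (q : Quot (actionRel G X)) :
    ∑ c : π₀ X with Quot.mk (actionRel G X) c.out = q, ((Nat.card (Aut c.out) : ℚ))⁻¹ =
      Nat.card G / Nat.card (Σ g : G, (g • q.out) ⟶ q.out) := by
  classical
  have fiber_eq_orbit (c : π₀ X) : Quot.mk (actionRel G X) c.out = q ↔ c ∈ orbit G ⟦q.out⟧ := by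
    conv_lhs => rw [← Quot.out_eq q]
    rw [eq_comm, quot_mk_actionRel_eq_iff smul_mk, Quotient.out_eq]
  have invariant (g : G) (c : π₀ X) :
      ((Nat.card (Aut (g • c).out) : ℚ))⁻¹ = ((Nat.card (Aut c.out) : ℚ))⁻¹ := by
    induction c using Quotient.inductionOn with
    | h x => rw [smul_mk, card_aut_out_mk, card_aut_out_mk, card_aut_smul]
  rw [Finset.filter_congr fun c _ => fiber_eq_orbit c,
    MulAction.sum_orbit_eq_card_smul _ invariant, nsmul_eq_mul, card_aut_out_mk,
    card_sigma_smul_hom smul_mk, Nat.card_coe_set_eq, ← index_stabilizer,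
    ← (stabilizer G (⟦q.out⟧ : π₀ X)).card_mul_index]
  have : 0 < Nat.card (stabilizer G (⟦q.out⟧ : π₀ X)) := Nat.card_pos
  have : 0 < Nat.card (Aut q.out) := Nat.card_pos
  push_cast
  field_simp

end IsoClassAction

section SmulHom

variable {G X : Type*} [Group G] [Groupoid X] [MulAction G X]

abbrev isoClassesMulAction (smulHom : ∀ (g : G) {x y : X}, (x ⟶ y) → ((g • x) ⟶ (g • y))) :
    MulAction G (π₀ X) where
  smul g := Quotient.map (g • ·) fun _ _ ⟨e⟩ => ⟨asIso (smulHom g e.hom)⟩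
  one_smul c := Quotient.inductionOn c fun x => congrArg _ (one_smul G x)
  mul_smul g h c := Quotient.inductionOn c fun x => congrArg _ (mul_smul g h x)

theorem smulHom_injective (smulHom : ∀ (g : G) {x y : X}, (x ⟶ y) → ((g • x) ⟶ (g • y)))
    (smul_one : ∀ {x y : X} (f : x ⟶ y),
      smulHom (1 : G) f = eqToHom (one_smul G x) ≫ f ≫ eqToHom (one_smul G y).symm)
    (smul_mul : ∀ (g h : G) {x y : X} (f : x ⟶ y),
      smulHom (g * h) f =
        eqToHom (mul_smul g h x) ≫ smulHom g (smulHom h f) ≫ eqToHom (mul_smul g h y).symm)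
    (g : G) {x y : X} : Function.Injective (smulHom g (x := x) (y := y)) := by
  intro a b hab
  have h : smulHom (g⁻¹ * g) a = smulHom (g⁻¹ * g) b := by rw [smul_mul, smul_mul, hab]
  -- `g⁻¹ * g` is `1` only propositionally, so it must be generalized before `smul_one` applies.
  obtain ⟨k, rfl, h⟩ : ∃ k : G, k = 1 ∧ smulHom k a = smulHom k b := ⟨_, inv_mul_cancel g, h⟩
  rwa [smul_one, smul_one, cancel_epi, cancel_mono] at h

theorem card_aut_smul [∀ x : X, Finite (Aut x)]
    (smulHom : ∀ (g : G) {x y : X}, (x ⟶ y) → ((g • x) ⟶ (g • y)))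
    (smul_one : ∀ {x y : X} (f : x ⟶ y),
      smulHom (1 : G) f = eqToHom (one_smul G x) ≫ f ≫ eqToHom (one_smul G y).symm)
    (smul_mul : ∀ (g h : G) {x y : X} (f : x ⟶ y),
      smulHom (g * h) f =
        eqToHom (mul_smul g h x) ≫ smulHom g (smulHom h f) ≫ eqToHom (mul_smul g h y).symm)
    (g : G) (x : X) : Nat.card (Aut (g • x)) = Nat.card (Aut x) := by
  have := finite_hom (X := X)
  have card_aut (y : X) : Nat.card (Aut y) = Nat.card (y ⟶ y) :=
    Nat.card_congr (isoEquivHom y y)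
  have inj (k : G) (y : X) := smulHom_injective smulHom smul_one smul_mul k (x := y) (y := y)
  have le := Nat.card_le_card_of_injective _ (inj g x)
  have ge := Nat.card_le_card_of_injective _ (inj g⁻¹ (g • x))
  rw [inv_smul_smul] at ge
  rw [card_aut, card_aut]
  exact le_antisymm ge le

end SmulHom

end Groupoid

end CategoryTheory

/-- For an action of a finite group `G` on a finite groupoid `X` (acting on objects by a
`MulAction` and on arrows by `smulHom`, functorially and compatibly with the group law),
the cardinality of the homotopy quotient (action groupoid) `X/G` — whose objects are those
of `X` and whose arrows `x → y` are pairs `(g, φ : g • x ⟶ y)` — equals `|X| / |G|`.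
The homotopy quotient's cardinality is computed from its isomorphism classes
(the quotient of `X` by `x ≈ y ↔ ∃ g, (g • x ⟶ y)` nonempty) and its automorphism
groups (`Σ g : G, (g • x ⟶ x)`). -/
theorem stmt7 {G : Type*} [Group G] [Finite G] {X : Type*} [Groupoid X] [MulAction G X]
    [Finite (Quotient (isIsomorphicSetoid X))] [∀ x : X, Finite (Aut x)]
    (smulHom : ∀ (g : G) {x y : X}, (x ⟶ y) → ((g • x) ⟶ (g • y)))
    (smul_id : ∀ (g : G) (x : X), smulHom g (𝟙 x) = 𝟙 (g • x))
    (smul_comp : ∀ (g : G) {x y z : X} (f : x ⟶ y) (h : y ⟶ z),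
      smulHom g (f ≫ h) = smulHom g f ≫ smulHom g h)
    (smul_one : ∀ {x y : X} (f : x ⟶ y),
      smulHom (1 : G) f = eqToHom (one_smul G x) ≫ f ≫ eqToHom (one_smul G y).symm)
    (smul_mul : ∀ (g h : G) {x y : X} (f : x ⟶ y),
      smulHom (g * h) f =
        eqToHom (mul_smul g h x) ≫ smulHom g (smulHom h f) ≫ eqToHom (mul_smul g h y).symm) :
    (∑ᶠ q : Quot (fun x y : X => ∃ g : G, Nonempty ((g • x) ⟶ y)),
        ((Nat.card (Σ g : G, ((g • (Quot.out q)) ⟶ (Quot.out q))) : ℚ))⁻¹) =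
      gcard X / (Nat.card G : ℚ) := by
  classical
  let := Groupoid.isoClassesMulAction smulHom
  have smul_mk (g : G) (x : X) : g • (⟦x⟧ : π₀ X) = ⟦g • x⟧ := rfl
  have := Fintype.ofFinite (π₀ X)
  let p (c : π₀ X) : Quot (Groupoid.actionRel G X) := Quot.mk _ c.out
  have p_surjective : Function.Surjective p := fun q => Quot.inductionOn q fun x =>
    ⟨⟦x⟧, (Groupoid.quot_mk_actionRel_eq_iff smul_mk).2
      (by rw [Quotient.out_eq]; exact MulAction.mem_orbit_self _)⟩
  have := Fintype.ofSurjective p p_surjective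
  have : (Nat.card G : ℚ) ≠ 0 := Nat.cast_ne_zero.2 Nat.card_pos.ne'
  change ∑ᶠ q : Quot (Groupoid.actionRel G X),
    ((Nat.card (Σ g : G, (g • q.out) ⟶ q.out) : ℚ))⁻¹ = _
  rw [gcard, finsum_eq_sum_of_fintype, finsum_eq_sum_of_fintype,
    ← Finset.sum_fiberwise Finset.univ p, Finset.sum_div]
  refine Finset.sum_congr rfl fun q _ => ?_
  rw [Groupoid.sum_inv_card_aut_fiber smul_mk (Groupoid.card_aut_smul smulHom smul_one smul_mul)]
  field_simp
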